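/- If for each player j the average overall regret satisfies R_j^T ≤ ε, then the profile of average strategies over the T iterations is a 2ε-Nash equilibrium in a two-player zero-sum game. -/
import Mathlib


open Finset

/-- The empirical (average) mixed strategy of a sequence of pure strategies. -/
noncomputable def avgMix {T : ℕ} {A : Type} [DecidableEq A] [Fintype A]
    (s : Fin T → A) : A → ℝ :=
  fun x => ((univ.filter (fun t => s t = x)).card : ℝ) / T

/-- Expected utility of mixed strategies. -/
noncomputable def expU {A B : Type} [Fintype A] [Fintype B]
    (u : A → B → ℝ) (p : A → ℝ) (q : B → ℝ) : ℝ :=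
  ∑ x : A, ∑ y : B, p x * q y * u x y

lemma avg_sum' {T : ℕ} {A : Type} [DecidableEq A] [Fintype A] (hT : 0 < T)
    (s : Fin T → A) (f : A → ℝ) :
    ∑ x : A, avgMix s x * f x = (1 / (T : ℝ)) * ∑ t : Fin T, f (s t) := by
  have h := Finset.sum_fiberwise (Finset.univ : Finset (Fin T)) s (fun t => f (s t))
  have h2 : ∀ x : A, ∑ t ∈ Finset.univ.filter (fun t => s t = x), f (s t)
      = ((Finset.univ.filter (fun t => s t = x)).card : ℝ) * f x := by
    intro x
    rw [Finset.sum_congr rfl (fun t ht => by rw [(Finset.mem_filter.1 ht).2]),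
        Finset.sum_const, nsmul_eq_mul]
  rw [← h]
  rw [Finset.mul_sum]
  refine Finset.sum_congr rfl fun x _ => ?_
  rw [h2, avgMix]
  ring

lemma avgMix_nonneg' {T : ℕ} {A : Type} [DecidableEq A] [Fintype A]
    (s : Fin T → A) (x : A) : 0 ≤ avgMix s x :=
  div_nonneg (Nat.cast_nonneg _) (Nat.cast_nonneg _)

lemma avgMix_sum_one {T : ℕ} {A : Type} [DecidableEq A] [Fintype A] (hT : 0 < T)
    (s : Fin T → A) : ∑ x : A, avgMix s x = 1 := by
  have := avg_sum' hT s (fun _ => 1)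
  simp only [mul_one] at this
  rw [this, Finset.sum_const, Finset.card_univ, Fintype.card_fin, nsmul_eq_mul, mul_one]
  field_simp

lemma mix_le {A : Type} [Fintype A] (p f : A → ℝ) (c : ℝ)
    (hp0 : ∀ x, 0 ≤ p x) (hp1 : ∑ x : A, p x = 1) (hf : ∀ x, f x ≤ c) :
    ∑ x : A, p x * f x ≤ c := by
  calc ∑ x : A, p x * f x ≤ ∑ x : A, p x * c :=
        Finset.sum_le_sum fun x _ => mul_le_mul_of_nonneg_left (hf x) (hp0 x)
    _ = c := by rw [← Finset.sum_mul, hp1, one_mul]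

lemma mix_ge {A : Type} [Fintype A] (p f : A → ℝ) (c : ℝ)
    (hp0 : ∀ x, 0 ≤ p x) (hp1 : ∑ x : A, p x = 1) (hf : ∀ x, c ≤ f x) :
    c ≤ ∑ x : A, p x * f x := by
  calc c = ∑ x : A, p x * c := by rw [← Finset.sum_mul, hp1, one_mul]
    _ ≤ ∑ x : A, p x * f x :=
        Finset.sum_le_sum fun x _ => mul_le_mul_of_nonneg_left (hf x) (hp0 x)

lemma expU_left {A B : Type} [Fintype A] [Fintype B]
    (u : A → B → ℝ) (p : A → ℝ) (q : B → ℝ) :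
    expU u p q = ∑ x : A, p x * ∑ y : B, q y * u x y := by
  unfold expU
  refine Finset.sum_congr rfl fun x _ => ?_
  rw [Finset.mul_sum]
  exact Finset.sum_congr rfl fun y _ => by ring

lemma expU_right {A B : Type} [Fintype A] [Fintype B]
    (u : A → B → ℝ) (p : A → ℝ) (q : B → ℝ) :
    expU u p q = ∑ y : B, q y * ∑ x : A, p x * u x y := by
  unfold expU
  rw [Finset.sum_comm]
  refine Finset.sum_congr rfl fun y _ => ?_
  rw [Finset.mul_sum]
  exact Finset.sum_congr rfl fun x _ => by ring

/-- In a two-player zero-sum game, if both players' average overall regrets are at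
most ε, then the profile of average strategies is a 2ε-Nash equilibrium. -/
theorem stmt_17 {A B : Type} [Fintype A] [Fintype B] [Nonempty A] [Nonempty B]
    [DecidableEq A] [DecidableEq B]
    (T : ℕ) (hT : 0 < T) (a : Fin T → A) (b : Fin T → B)
    (u : A → B → ℝ) (ε : ℝ)
    (hR1 : (1 / (T : ℝ)) *
      ((⨆ a' : A, ∑ t : Fin T, u a' (b t)) - ∑ t : Fin T, u (a t) (b t)) ≤ ε)
    (hR2 : (1 / (T : ℝ)) *
      ((⨆ b' : B, ∑ t : Fin T, -u (a t) b') - ∑ t : Fin T, -u (a t) (b t)) ≤ ε) :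
    (∀ p : A → ℝ, (∀ x, 0 ≤ p x) → (∑ x : A, p x) = 1 →
      expU u p (avgMix b) ≤ expU u (avgMix a) (avgMix b) + 2 * ε) ∧
    (∀ q : B → ℝ, (∀ y, 0 ≤ q y) → (∑ y : B, q y) = 1 →
      -expU u (avgMix a) q ≤ -expU u (avgMix a) (avgMix b) + 2 * ε) := by
  have hT' : (0:ℝ) < T := Nat.cast_pos.2 hT
  set V : ℝ := ∑ t : Fin T, u (a t) (b t) with hV
  -- bound 1: for every x, (1/T) * ∑_t u x (b t) ≤ ε + V/T
  have hb1 : ∀ x : A, (1 / (T:ℝ)) * ∑ t : Fin T, u x (b t) ≤ ε + V / T := by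
    intro x
    have hbdd : BddAbove (Set.range fun a' : A => ∑ t : Fin T, u a' (b t)) :=
      Set.Finite.bddAbove (Set.finite_range _)
    have hle : ∑ t : Fin T, u x (b t) ≤ ⨆ a' : A, ∑ t : Fin T, u a' (b t) :=
      le_ciSup hbdd x
    have h2 := mul_le_mul_of_nonneg_left hle (le_of_lt (show (0:ℝ) < 1/T by positivity))
    rw [mul_sub] at hR1
    have he : (1/(T:ℝ)) * V = V / T := one_div_mul_eq_div _ _
    linarith
  -- bound 2: for every y, V/T - ε ≤ (1/T) * ∑_t u (a t) y
  have hb2 : ∀ y : B, V / T - ε ≤ (1 / (T:ℝ)) * ∑ t : Fin T, u (a t) y := by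
    intro y
    have hbdd : BddAbove (Set.range fun b' : B => ∑ t : Fin T, -u (a t) b') :=
      Set.Finite.bddAbove (Set.finite_range _)
    have hle : ∑ t : Fin T, -u (a t) y ≤ ⨆ b' : B, ∑ t : Fin T, -u (a t) b' :=
      le_ciSup hbdd y
    have hs : ∑ t : Fin T, -u (a t) y = -∑ t : Fin T, u (a t) y := by
      rw [Finset.sum_neg_distrib]
    have hs2 : ∑ t : Fin T, -u (a t) (b t) = -V := by
      rw [hV, Finset.sum_neg_distrib]
    rw [hs] at hle
    rw [hs2, sub_neg_eq_add, mul_add] at hR2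
    have h2 := mul_le_mul_of_nonneg_left hle (le_of_lt (show (0:ℝ) < 1/T by positivity))
    rw [mul_neg] at h2
    have he : (1/(T:ℝ)) * V = V / T := one_div_mul_eq_div _ _
    linarith
  -- key evaluations
  have hmid : V / T - ε ≤ expU u (avgMix a) (avgMix b) := by
    rw [expU_right]
    refine mix_ge _ _ _ (avgMix_nonneg' b) (avgMix_sum_one hT b) fun y => ?_
    rw [avg_sum' hT a (fun x => u x y)]
    exact hb2 y
  have hmid2 : expU u (avgMix a) (avgMix b) ≤ ε + V / T := by
    rw [expU_left]
    refine mix_le _ _ _ (avgMix_nonneg' a) (avgMix_sum_one hT a) fun x => ?_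
    rw [avg_sum' hT b (fun y => u x y)]
    exact hb1 x
  constructor
  · intro p hp0 hp1
    have h1 : expU u p (avgMix b) ≤ ε + V / T := by
      rw [expU_left]
      refine mix_le _ _ _ hp0 hp1 fun x => ?_
      rw [avg_sum' hT b (fun y => u x y)]
      exact hb1 x
    linarith
  · intro q hq0 hq1
    have h1 : V / T - ε ≤ expU u (avgMix a) q := by
      rw [expU_right]
      refine mix_ge _ _ _ hq0 hq1 fun y => ?_
      rw [avg_sum' hT a (fun x => u x y)]
      exact hb2 y
    linarith
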